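/- arXiv:1402.1457 — 5 statements merged into one kernel-verified Lean document; each statement's English description precedes it below -/
import Mathlib

section
/- (Robbins–Siegmund-type convergence) Let {v_k} be a sequence of nonnegative random variables adapted to a filtration {F_k} such that E[v_{k+1} | F_k] ≤ (1 − u_k) v_k + β_k almost surely for all k ≥ 0, where 0 ≤ u_k ≤ 1, β_k ≥ 0 are deterministic, ∑_k u_k = ∞, ∑_k β_k < ∞, and β_k / u_k → 0 as k → ∞. Then v_k → 0 almost surely. -/
open MeasureTheory Filter

lemma aux_det {a u β : ℕ → ℝ} (ha0 : ∀ k, 0 ≤ a k)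
    (hu : ∀ k, u k ∈ Set.Icc (0:ℝ) 1) (hβ : ∀ k, 0 ≤ β k)
    (hrec : ∀ k, a (k+1) ≤ (1 - u k) * a k + β k)
    (husum : ¬ Summable u) (hβsum : Summable β)
    (hratio : Tendsto (fun k => β k / u k) atTop (nhds 0)) :
    Tendsto a atTop (nhds 0) := by
  rw [Metric.tendsto_atTop]
  intro ε hε
  have hε8 : (0:ℝ) < ε / 8 := by linarith
  -- step 1: eventually β k ≤ ε/8 * u k + γ k
  obtain ⟨N1, hN1⟩ := (Metric.tendsto_atTop.1 hratio) (ε/8) hε8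
  set γ : ℕ → ℝ := fun k => if u k = 0 then β k else 0 with hγdef
  have hγ0 : ∀ k, 0 ≤ γ k := by
    intro k; by_cases h : u k = 0 <;> simp [hγdef, h, hβ k]
  have hγβ : ∀ k, γ k ≤ β k := by
    intro k; by_cases h : u k = 0 <;> simp [hγdef, h, hβ k]
  have hγsum : Summable γ := hβsum.of_nonneg_of_le hγ0 hγβ
  have hβle : ∀ k ≥ N1, β k ≤ ε/8 * u k + γ k := by
    intro k hk
    by_cases h : u k = 0
    · simp [hγdef, h]
    · have hupos : 0 < u k := lt_of_le_of_ne (hu k).1 (Ne.symm h)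
      have := hN1 k hk
      rw [Real.dist_eq, sub_zero, abs_of_nonneg (div_nonneg (hβ k) (hu k).1)] at this
      have : β k < ε/8 * u k := by
        rw [div_lt_iff₀ hupos] at this; linarith
      simp only [hγdef, if_neg h]
      linarith
  -- b sequence
  set b : ℕ → ℝ := fun k => max (a k - ε/8) 0 with hbdef
  have hb0 : ∀ k, 0 ≤ b k := fun k => le_max_right _ _
  have hab : ∀ k, a k ≤ b k + ε/8 := by
    intro k; have := le_max_left (a k - ε/8) 0; simp only [hbdef]; linarith
  have hbrec : ∀ k ≥ N1, b (k+1) ≤ (1 - u k) * b k + γ k := by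
    intro k hk
    have h1 : 0 ≤ 1 - u k := by have := (hu k).2; linarith
    have h2 : a k - ε/8 ≤ b k := le_max_left _ _
    have : a (k+1) - ε/8 ≤ (1 - u k) * b k + γ k := by
      have := hrec k
      have := hβle k hk
      nlinarith [mul_le_mul_of_nonneg_left h2 h1]
    exact max_le this (add_nonneg (mul_nonneg h1 (hb0 k)) (hγ0 k))
  -- choose M with tail of γ small
  have htail : Tendsto (fun M => ∑' i, γ (i + M)) atTop (nhds 0) := tendsto_sum_nat_add γ
  obtain ⟨M0, hM0⟩ := (Metric.tendsto_atTop.1 htail) (ε/8) hε8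
  set M := max M0 N1 with hMdef
  have hMN1 : N1 ≤ M := le_max_right _ _
  have hTM : ∑' i, γ (i + M) < ε/8 := by
    have := hM0 M (le_max_left _ _)
    rw [Real.dist_eq, sub_zero, abs_of_nonneg (tsum_nonneg fun i => hγ0 _)] at this
    exact this
  have hγshift : Summable (fun i => γ (i + M)) := (summable_nat_add_iff M).2 hγsum
  -- induction bound
  have hkey : ∀ m, b (M + m) ≤ b M * ∏ i ∈ Finset.range m, (1 - u (M + i))
      + ∑ i ∈ Finset.range m, γ (M + i) := by
    intro m
    induction m with
    | zero => simp
    | succ m ih =>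
      have h1 : 0 ≤ 1 - u (M + m) := by have := (hu (M+m)).2; linarith
      have h2 : 1 - u (M + m) ≤ 1 := by have := (hu (M+m)).1; linarith
      have hP0 : 0 ≤ ∏ i ∈ Finset.range m, (1 - u (M + i)) :=
        Finset.prod_nonneg fun i _ => by have := (hu (M+i)).2; linarith
      have hS0 : 0 ≤ ∑ i ∈ Finset.range m, γ (M + i) :=
        Finset.sum_nonneg fun i _ => hγ0 _
      have := hbrec (M + m) (le_trans hMN1 (Nat.le_add_right _ _))
      rw [Finset.prod_range_succ, Finset.sum_range_succ]
      have hstep : b (M + m + 1) ≤ (1 - u (M+m)) * b (M + m) + γ (M + m) := this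
      calc b (M + (m+1)) = b (M + m + 1) := by ring_nf
        _ ≤ (1 - u (M+m)) * b (M + m) + γ (M + m) := hstep
        _ ≤ (1 - u (M+m)) * (b M * ∏ i ∈ Finset.range m, (1 - u (M + i))
              + ∑ i ∈ Finset.range m, γ (M + i)) + γ (M + m) :=
            by nlinarith [mul_le_mul_of_nonneg_left ih h1]
        _ ≤ b M * ((∏ i ∈ Finset.range m, (1 - u (M + i))) * (1 - u (M+m)))
              + (∑ i ∈ Finset.range m, γ (M + i) + γ (M + m)) := by
            nlinarith [hb0 M, mul_le_mul_of_nonneg_right h2 hS0]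
  -- product tends to 0
  have husum' : ¬ Summable (fun i => u (M + i)) := by
    intro h
    exact husum ((summable_nat_add_iff M).1 (h.congr (fun i => by rw [Nat.add_comm])))
  have hdiv : Tendsto (fun m => ∑ i ∈ Finset.range m, u (M + i)) atTop atTop :=
    (not_summable_iff_tendsto_nat_atTop_of_nonneg (fun i => (hu _).1)).1 husum'
  have hprod0 : Tendsto (fun m => ∏ i ∈ Finset.range m, (1 - u (M + i))) atTop (nhds 0) := by
    have hub : ∀ m, ∏ i ∈ Finset.range m, (1 - u (M + i))
        ≤ Real.exp (-(∑ i ∈ Finset.range m, u (M + i))) := by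
      intro m
      calc ∏ i ∈ Finset.range m, (1 - u (M + i))
          ≤ ∏ i ∈ Finset.range m, Real.exp (-(u (M + i))) := by
            refine Finset.prod_le_prod (fun i _ => by have := (hu (M+i)).2; linarith)
              (fun i _ => ?_)
            have := Real.add_one_le_exp (-(u (M+i)))
            linarith
        _ = Real.exp (∑ i ∈ Finset.range m, -(u (M + i))) := (Real.exp_sum _ _).symm
        _ = Real.exp (-(∑ i ∈ Finset.range m, u (M + i))) := by rw [Finset.sum_neg_distrib]
    have hexp : Tendsto (fun m => Real.exp (-(∑ i ∈ Finset.range m, u (M + i)))) atTop (nhds 0) :=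
      Real.tendsto_exp_atBot.comp (tendsto_neg_atTop_atBot.comp hdiv)
    refine squeeze_zero (fun m => Finset.prod_nonneg fun i _ => by have := (hu (M+i)).2; linarith)
      hub hexp
  have hbM0 : Tendsto (fun m => b M * ∏ i ∈ Finset.range m, (1 - u (M + i))) atTop (nhds 0) := by
    simpa using hprod0.const_mul (b M)
  obtain ⟨m0, hm0⟩ := (Metric.tendsto_atTop.1 hbM0) (ε/8) hε8
  refine ⟨M + m0, fun n hn => ?_⟩
  obtain ⟨m, rfl⟩ := Nat.exists_eq_add_of_le hn
  rw [Nat.add_assoc]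
  have hm : m0 ≤ m0 + m := Nat.le_add_right _ _
  have hbound := hkey (m0 + m)
  have hP : b M * ∏ i ∈ Finset.range (m0+m), (1 - u (M + i)) < ε/8 := by
    have := hm0 (m0+m) hm
    rw [Real.dist_eq, sub_zero] at this
    exact lt_of_le_of_lt (le_abs_self _) this
  have hS : ∑ i ∈ Finset.range (m0+m), γ (M + i) ≤ ∑' i, γ (i + M) := by
    have := Summable.sum_le_tsum (Finset.range (m0+m)) (fun i _ => hγ0 _) hγshift
    calc ∑ i ∈ Finset.range (m0+m), γ (M + i)
        = ∑ i ∈ Finset.range (m0+m), γ (i + M) := by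
          refine Finset.sum_congr rfl fun i _ => by rw [Nat.add_comm]
      _ ≤ ∑' i, γ (i + M) := this
  have : b (M + (m0 + m)) < ε/4 := by linarith
  have han := hab (M + (m0 + m))
  rw [Real.dist_eq, sub_zero, abs_of_nonneg (ha0 _)]
  linarith


theorem supermartingale_convergence_to_zero
    {Ω : Type*} {m0 : MeasurableSpace Ω} {μ : Measure Ω} [IsProbabilityMeasure μ]
    (𝓕 : Filtration ℕ m0) (v : ℕ → Ω → ℝ) (u β : ℕ → ℝ)
    (hadapted : Adapted 𝓕 v) (hint : ∀ k, Integrable (v k) μ)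
    (hvnonneg : ∀ k, 0 ≤ᵐ[μ] v k)
    (hu : ∀ k, u k ∈ Set.Icc (0:ℝ) 1) (hβ : ∀ k, 0 ≤ β k)
    (hrec : ∀ k, ∀ᵐ ω ∂μ, (μ[v (k+1) | 𝓕 k]) ω ≤ (1 - u k) * v k ω + β k)
    (husum : ¬ Summable u) (hβsum : Summable β)
    (hratio : Tendsto (fun k => β k / u k) atTop (nhds 0)) :
    ∀ᵐ ω ∂μ, Tendsto (fun k => v k ω) atTop (nhds 0) := by
  -- tail sums of β
  set T : ℕ → ℝ := fun k => ∑' i, β (i + k) with hTdef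
  have hT0 : ∀ k, 0 ≤ T k := fun k => tsum_nonneg fun i => hβ _
  have hTsucc : ∀ k, T k = β k + T (k+1) := by
    intro k
    have hs : Summable (fun i => β (i + k)) := (summable_nat_add_iff k).2 hβsum
    have := Summable.tsum_eq_zero_add hs
    simp only [zero_add] at this
    rw [hTdef]
    simp only []
    rw [this]
    congr 1
    apply tsum_congr
    intro i
    congr 1
    omega
  have hTtend : Tendsto T atTop (nhds 0) := tendsto_sum_nat_add β
  -- the supermartingale X
  set X : ℕ → Ω → ℝ := fun k ω => v k ω + T k with hXdef
  have hXadapted : Adapted 𝓕 X := by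
    intro k
    exact (hadapted k).add measurable_const
  have hXint : ∀ k, Integrable (X k) μ := fun k => (hint k).add (integrable_const _)
  have hXsuper : Supermartingale X 𝓕 μ := by
    refine supermartingale_nat hXadapted.stronglyAdapted hXint fun k => ?_
    have hce : μ[X (k+1) | 𝓕 k] =ᵐ[μ] μ[v (k+1) | 𝓕 k] + fun _ => T (k+1) := by
      have h1 : μ[X (k+1) | 𝓕 k] =ᵐ[μ] μ[v (k+1) | 𝓕 k] + μ[(fun _ => T (k+1)) | 𝓕 k] :=
        condExp_add (hint (k+1)) (integrable_const _) _
      have h2 : μ[(fun (_ : Ω) => T (k+1)) | 𝓕 k] = fun _ => T (k+1) :=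
        condExp_const (𝓕.le k) _
      rw [h2] at h1
      exact h1
    filter_upwards [hce, hrec k, hvnonneg k] with ω h1 h2 h3
    have huk := (hu k).1
    have h3' : 0 ≤ v k ω := h3
    have h1' : (μ[X (k+1) | 𝓕 k]) ω = (μ[v (k+1) | 𝓕 k]) ω + T (k+1) := h1
    have hXk : X k ω = v k ω + T k := rfl
    have hmul : 0 ≤ u k * v k ω := mul_nonneg huk h3'
    have hTk := hTsucc k
    show (μ[X (k+1) | 𝓕 k]) ω ≤ X k ω
    rw [h1', hXk, hTk]
    nlinarith
  -- a.e. convergence of X to some limit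
  have hXnonneg : ∀ k, 0 ≤ᵐ[μ] X k := by
    intro k
    filter_upwards [hvnonneg k] with ω h
    exact add_nonneg h (hT0 k)
  have hEX : ∀ n, ∫ ω, X n ω ∂μ ≤ ∫ ω, X 0 ω ∂μ := by
    intro n
    have := hXsuper.setIntegral_le (Nat.zero_le n) (MeasurableSet.univ)
    simpa [Measure.restrict_univ] using this
  have hbdd : ∀ n, eLpNorm (X n) 1 μ ≤ ENNReal.ofReal (∫ ω, X 0 ω ∂μ) := by
    intro n
    have h1 : eLpNorm (X n) 1 μ = ENNReal.ofReal (∫ ω, X n ω ∂μ) := by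
      rw [eLpNorm_one_eq_lintegral_enorm,
        ofReal_integral_eq_lintegral_ofReal (hXint n) (hXnonneg n)]
      refine lintegral_congr_ae ?_
      filter_upwards [hXnonneg n] with ω h
      rw [← Real.enorm_eq_ofReal h]
    rw [h1]
    exact ENNReal.ofReal_le_ofReal (hEX n)
  have hconv : ∀ᵐ ω ∂μ, ∃ c, Tendsto (fun n => (-X n) ω) atTop (nhds c) := by
    refine Submartingale.exists_ae_tendsto_of_bdd (R := (∫ ω, X 0 ω ∂μ).toNNReal)
      hXsuper.neg (fun n => ?_)
    have : eLpNorm (-X n) 1 μ = eLpNorm (X n) 1 μ := eLpNorm_neg _ _ _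
    rw [this]
    refine le_trans (hbdd n) ?_
    rw [ENNReal.ofReal]
  -- expectations tend to 0
  set a : ℕ → ℝ := fun k => ∫ ω, v k ω ∂μ with hadef
  have ha0 : ∀ k, 0 ≤ a k := fun k => integral_nonneg_of_ae (hvnonneg k)
  have harec : ∀ k, a (k+1) ≤ (1 - u k) * a k + β k := by
    intro k
    have h1 : ∫ ω, (μ[v (k+1) | 𝓕 k]) ω ∂μ = a (k+1) := integral_condExp (𝓕.le k)
    have h2 : ∫ ω, (μ[v (k+1) | 𝓕 k]) ω ∂μ ≤ ∫ ω, ((1 - u k) * v k ω + β k) ∂μ := by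
      refine integral_mono_ae integrable_condExp (((hint k).const_mul _).add
        (integrable_const _)) ?_
      exact hrec k
    have h3 : ∫ ω, ((1 - u k) * v k ω + β k) ∂μ = (1 - u k) * a k + β k := by
      rw [integral_add ((hint k).const_mul _) (integrable_const _), integral_const_mul,
        integral_const]
      simp [hadef]
    rw [h1, h3] at h2
    exact h2
  have hatend : Tendsto a atTop (nhds 0) :=
    aux_det ha0 hu hβ harec husum hβsum hratio
  -- Fatou argument
  have hvmeas : ∀ k, AEMeasurable (fun ω => ENNReal.ofReal (v k ω)) μ :=
    fun k => ENNReal.measurable_ofReal.comp_aemeasurable (hint k).aemeasurable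
  set w : ℕ → Ω → ENNReal := fun k => (hvmeas k).mk _ with hwdef
  have hwmeas : ∀ k, Measurable (w k) := fun k => (hvmeas k).measurable_mk
  have hweq : ∀ k, (fun ω => ENNReal.ofReal (v k ω)) =ᵐ[μ] w k := fun k => (hvmeas k).ae_eq_mk
  have hlint : ∀ k, ∫⁻ ω, w k ω ∂μ = ENNReal.ofReal (a k) := by
    intro k
    rw [← lintegral_congr_ae (hweq k),
      ← ofReal_integral_eq_lintegral_ofReal (hint k) (hvnonneg k)]
  have hfatou : ∫⁻ ω, liminf (fun k => w k ω) atTop ∂μ = 0 := by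
    have h1 : ∫⁻ ω, liminf (fun k => w k ω) atTop ∂μ
        ≤ liminf (fun k => ∫⁻ ω, w k ω ∂μ) atTop := lintegral_liminf_le hwmeas
    have h2 : liminf (fun k => ∫⁻ ω, w k ω ∂μ) atTop = 0 := by
      have : Tendsto (fun k => ∫⁻ ω, w k ω ∂μ) atTop (nhds 0) := by
        simp_rw [hlint]
        have := (ENNReal.continuous_ofReal.tendsto 0).comp hatend
        simpa [Function.comp_def] using this
      exact this.liminf_eq
    rw [h2] at h1
    exact le_antisymm h1 zero_le
  have hae0 : ∀ᵐ ω ∂μ, liminf (fun k => w k ω) atTop = 0 := by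
    have := (lintegral_eq_zero_iff (Measurable.liminf hwmeas)).1 hfatou
    filter_upwards [this] with ω h
    exact h
  -- combine
  filter_upwards [hconv, ae_all_iff.2 hvnonneg, hae0, ae_all_iff.2 hweq] with ω hc hnn hl hw
  obtain ⟨c, hc⟩ := hc
  have hXc : Tendsto (fun n => X n ω) atTop (nhds (-c)) := by
    have := hc.neg
    simpa using this
  have hvc : Tendsto (fun n => v n ω) atTop (nhds (-c - 0)) := by
    have : (fun n => v n ω) = fun n => X n ω - T n := by
      funext n; simp [hXdef]
    rw [this]
    exact hXc.sub hTtend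
  rw [sub_zero] at hvc
  have hcnn : 0 ≤ -c := le_of_tendsto_of_tendsto' tendsto_const_nhds hvc fun n => hnn n
  have hofr : Tendsto (fun n => ENNReal.ofReal (v n ω)) atTop (nhds (ENNReal.ofReal (-c))) :=
    (ENNReal.continuous_ofReal.tendsto _).comp hvc
  have hliminf : liminf (fun n => w n ω) atTop = ENNReal.ofReal (-c) := by
    have : (fun n => w n ω) = fun n => ENNReal.ofReal (v n ω) := by
      funext n; exact (hw n).symm
    rw [this]
    exact hofr.liminf_eq
  rw [hliminf] at hl
  have : -c ≤ 0 := by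
    by_contra h
    push_neg at h
    rw [ENNReal.ofReal_eq_zero] at hl
    linarith
  have : -c = 0 := le_antisymm this hcnn
  rw [this] at hvc
  exact hvc
end

section
/- Let v_k, u_k, β_k, γ_k be nonnegative random variables adapted to a filtration F_k with ∑_k u_k < ∞ and ∑_k β_k < ∞ almost surely, and suppose E[v_{k+1} | F_k] ≤ (1 + u_k) v_k − γ_k + β_k almost surely for all k ≥ 0. Then {v_k} converges almost surely to a finite random variable and ∑_k γ_k < ∞ almost surely. -/
open MeasureTheory Filter

namespace RSaux

variable {Ω : Type*}

noncomputable def Q (u : ℕ → Ω → ℝ) (k : ℕ) (ω : Ω) : ℝ :=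
  ∏ j ∈ Finset.range k, (1 + u j ω)⁻¹

def good (u β : ℕ → Ω → ℝ) (a : ℝ) (k : ℕ) : Set Ω :=
  {ω | (∑ j ∈ Finset.range (k+1), u j ω) ≤ a ∧ (∑ j ∈ Finset.range (k+1), β j ω) ≤ a}

noncomputable def ind (u β : ℕ → Ω → ℝ) (a : ℝ) (k : ℕ) : Ω → ℝ :=
  (good u β a k).indicator 1

noncomputable def X (v u β γ : ℕ → Ω → ℝ) (a : ℝ) (k : ℕ) (ω : Ω) : ℝ :=
  ∑ j ∈ Finset.range k, ind u β a j ω *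
    (v (j+1) ω * Q u (j+1) ω - v j ω * Q u j ω + (γ j ω - β j ω) * Q u (j+1) ω)

section Pointwise

variable {u β γ v : ℕ → Ω → ℝ} {a : ℝ} {ω : Ω}

lemma Q_pos (hu : ∀ j, 0 ≤ u j ω) (k : ℕ) : 0 < Q u k ω :=
  Finset.prod_pos fun j _ => inv_pos.2 (by linarith [hu j])

lemma Q_le_one (hu : ∀ j, 0 ≤ u j ω) (k : ℕ) : Q u k ω ≤ 1 :=
  Finset.prod_le_one (fun j _ => (inv_pos.2 (by linarith [hu j])).le)
    (fun j _ => inv_le_one_of_one_le₀ (by linarith [hu j]))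

lemma Q_zero : Q u 0 ω = 1 := by simp [Q]

lemma Q_succ (k : ℕ) : Q u (k+1) ω = Q u k ω * (1 + u k ω)⁻¹ :=
  Finset.prod_range_succ _ _

lemma Q_mul (hu : ∀ j, 0 ≤ u j ω) (k : ℕ) : (1 + u k ω) * Q u (k+1) ω = Q u k ω := by
  have h : (1 : ℝ) + u k ω ≠ 0 := by linarith [hu k]
  rw [Q_succ]; field_simp

lemma Q_antitone (hu : ∀ j, 0 ≤ u j ω) : Antitone (fun k => Q u k ω) := by
  refine antitone_nat_of_succ_le fun k => ?_
  rw [Q_succ]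
  have h1 : (1 + u k ω)⁻¹ ≤ 1 := inv_le_one_of_one_le₀ (by linarith [hu k])
  nlinarith [Q_pos hu k]

lemma Q_lb (hu : ∀ j, 0 ≤ u j ω) (hsum : Summable fun j => u j ω) (k : ℕ) :
    (Real.exp (∑' j, u j ω))⁻¹ ≤ Q u k ω := by
  have h1 : ∏ j ∈ Finset.range k, (1 + u j ω) ≤ Real.exp (∑' j, u j ω) := by
    calc ∏ j ∈ Finset.range k, (1 + u j ω) ≤ ∏ j ∈ Finset.range k, Real.exp (u j ω) := by
          refine Finset.prod_le_prod (fun j _ => by linarith [hu j]) (fun j _ => ?_)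
          have := Real.add_one_le_exp (u j ω); linarith
      _ = Real.exp (∑ j ∈ Finset.range k, u j ω) := by rw [Real.exp_sum]
      _ ≤ Real.exp (∑' j, u j ω) :=
          Real.exp_le_exp.2 (Summable.sum_le_tsum _ (fun j _ => hu j) hsum)
  have h2 : Q u k ω = (∏ j ∈ Finset.range k, (1 + u j ω))⁻¹ := by
    rw [Q, ← Finset.prod_inv_distrib]
  have hp : 0 < ∏ j ∈ Finset.range k, (1 + u j ω) :=
    Finset.prod_pos fun j _ => by linarith [hu j]
  rw [h2]
  exact inv_anti₀ hp h1

lemma ind_nonneg (k : ℕ) : 0 ≤ ind u β a k ω := by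
  unfold ind; by_cases h : ω ∈ good u β a k <;>
    simp [Set.indicator_of_mem, Set.indicator_of_notMem, h]

lemma ind_le_one (k : ℕ) : ind u β a k ω ≤ 1 := by
  unfold ind; by_cases h : ω ∈ good u β a k <;>
    simp [Set.indicator_of_mem, Set.indicator_of_notMem, h]

lemma ind_of_mem {k : ℕ} (h : ω ∈ good u β a k) : ind u β a k ω = 1 := by
  simp [ind, Set.indicator_of_mem, h]

lemma ind_of_not_mem {k : ℕ} (h : ω ∉ good u β a k) : ind u β a k ω = 0 := by
  simp [ind, Set.indicator_of_notMem, h]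

lemma good_antitone (hu : ∀ j, 0 ≤ u j ω) (hβ : ∀ j, 0 ≤ β j ω) {k : ℕ}
    (h : ω ∈ good u β a (k+1)) : ω ∈ good u β a k := by
  obtain ⟨h1, h2⟩ := h
  exact ⟨le_trans (Finset.sum_le_sum_of_subset_of_nonneg
      (Finset.range_subset_range.2 (by omega)) fun j _ _ => hu j) h1,
    le_trans (Finset.sum_le_sum_of_subset_of_nonneg
      (Finset.range_subset_range.2 (by omega)) fun j _ _ => hβ j) h2⟩

lemma good_all (hu : ∀ j, 0 ≤ u j ω) (hβ : ∀ j, 0 ≤ β j ω) :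
    ∀ k, ω ∈ good u β a k → ∀ j ≤ k, ω ∈ good u β a j := by
  intro k
  induction k with
  | zero => intro h j hj; have hj0 : j = 0 := Nat.le_zero.1 hj; subst hj0; exact h
  | succ n ih =>
    intro h j hj
    rcases eq_or_lt_of_le hj with rfl | h'
    · exact h
    · exact ih (good_antitone hu hβ h) j (by omega)

lemma X_eq_of_all_one {k : ℕ} (h : ∀ j, j < k → ind u β a j ω = 1) :
    X v u β γ a k ω = v k ω * Q u k ω - v 0 ω +
      (∑ j ∈ Finset.range k, γ j ω * Q u (j+1) ω) -
      ∑ j ∈ Finset.range k, β j ω * Q u (j+1) ω := by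
  unfold X
  rw [Finset.sum_congr rfl (fun j hj => by
    rw [h j (Finset.mem_range.1 hj), one_mul])]
  have : ∀ j ∈ Finset.range k,
      v (j+1) ω * Q u (j+1) ω - v j ω * Q u j ω + (γ j ω - β j ω) * Q u (j+1) ω
      = (v (j+1) ω * Q u (j+1) ω - v j ω * Q u j ω) +
        (γ j ω * Q u (j+1) ω - β j ω * Q u (j+1) ω) := fun j _ => by ring
  rw [Finset.sum_congr rfl this, Finset.sum_add_distrib, Finset.sum_range_sub
    (fun j => v j ω * Q u j ω), Finset.sum_sub_distrib, Q_zero]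
  ring

lemma X_zero : X v u β γ a 0 ω = 0 := by simp [X]

lemma X_succ (k : ℕ) : X v u β γ a (k+1) ω = X v u β γ a k ω + ind u β a k ω *
    (v (k+1) ω * Q u (k+1) ω - v k ω * Q u k ω + (γ k ω - β k ω) * Q u (k+1) ω) := by
  unfold X; rw [Finset.sum_range_succ]

lemma X_lower (hu : ∀ j, 0 ≤ u j ω) (hβ : ∀ j, 0 ≤ β j ω) (hγ : ∀ j, 0 ≤ γ j ω)
    (hv : ∀ j, 0 ≤ v j ω) (ha : 0 ≤ a) :
    ∀ k, -(v 0 ω + a) ≤ X v u β γ a k ω := by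
  intro k
  induction k with
  | zero => rw [X_zero]; linarith [hv 0]
  | succ n ih =>
    by_cases hg : ω ∈ good u β a n
    · have hall : ∀ j, j < n + 1 → ind u β a j ω = 1 := fun j hj =>
        ind_of_mem (good_all hu hβ n hg j (by omega))
      rw [X_eq_of_all_one hall]
      have h1 : 0 ≤ v (n+1) ω * Q u (n+1) ω :=
        mul_nonneg (hv _) (Q_pos hu _).le
      have h2 : 0 ≤ ∑ j ∈ Finset.range (n+1), γ j ω * Q u (j+1) ω :=
        Finset.sum_nonneg fun j _ => mul_nonneg (hγ _) (Q_pos hu _).le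
      have h3 : ∑ j ∈ Finset.range (n+1), β j ω * Q u (j+1) ω ≤ a := by
        refine le_trans (Finset.sum_le_sum fun j _ => ?_) hg.2
        nlinarith [Q_pos hu (j+1), Q_le_one hu (j+1), hβ j]
      linarith
    · rw [X_succ, ind_of_not_mem hg, zero_mul, add_zero]; exact ih

lemma pointwise_conclusion (hu : ∀ j, 0 ≤ u j ω) (hβ : ∀ j, 0 ≤ β j ω)
    (hγ : ∀ j, 0 ≤ γ j ω) (hv : ∀ j, 0 ≤ v j ω)
    (husum : Summable fun j => u j ω) (hβsum : Summable fun j => β j ω)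
    (hX : ∀ n : ℕ, ∃ c, Tendsto (fun k => X v u β γ (n : ℝ) k ω) atTop (nhds c)) :
    (∃ l : ℝ, Tendsto (fun k => v k ω) atTop (nhds l)) ∧
      Summable fun k => γ k ω := by
  -- choose n large enough
  obtain ⟨n, hn⟩ := exists_nat_ge (max (∑' j, u j ω) (∑' j, β j ω))
  have hgood : ∀ k, ω ∈ good u β (n : ℝ) k := by
    intro k
    refine ⟨le_trans (Summable.sum_le_tsum _ (fun j _ => hu j) husum)
        (le_trans (le_max_left _ _) hn),
      le_trans (Summable.sum_le_tsum _ (fun j _ => hβ j) hβsum)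
        (le_trans (le_max_right _ _) hn)⟩
  obtain ⟨c, hc⟩ := hX n
  have hXeq : ∀ k, X v u β γ (n : ℝ) k ω = v k ω * Q u k ω - v 0 ω +
      (∑ j ∈ Finset.range k, γ j ω * Q u (j+1) ω) -
      ∑ j ∈ Finset.range k, β j ω * Q u (j+1) ω := fun k =>
    X_eq_of_all_one (fun j _ => ind_of_mem (hgood j))
  set M : ℝ := Real.exp (∑' j, u j ω) with hM
  have hMpos : 0 < M := Real.exp_pos _
  have hQlb := Q_lb hu husum
  have hQpos := Q_pos hu
  have hQ1 := Q_le_one hu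
  -- A : partial sums of β * Q
  set A : ℕ → ℝ := fun k => ∑ j ∈ Finset.range k, β j ω * Q u (j+1) ω with hA
  have hAmono : Monotone A := by
    refine monotone_nat_of_le_succ fun k => ?_
    simp only [hA, Finset.sum_range_succ]
    exact le_add_of_nonneg_right (mul_nonneg (hβ _) (hQpos _).le)
  have hAbdd : ∀ k, A k ≤ ∑' j, β j ω := by
    intro k
    refine le_trans (Finset.sum_le_sum fun j _ => ?_)
      (Summable.sum_le_tsum _ (fun j _ => hβ j) hβsum)
    nlinarith [hQpos (j+1), hQ1 (j+1), hβ j]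
  have hAconv : Tendsto A atTop (nhds (⨆ k, A k)) :=
    tendsto_atTop_ciSup hAmono ⟨∑' j, β j ω, fun x ⟨k, hk⟩ => hk ▸ hAbdd k⟩
  -- G : partial sums of γ * Q, bounded above
  set G : ℕ → ℝ := fun k => ∑ j ∈ Finset.range k, γ j ω * Q u (j+1) ω with hG
  obtain ⟨CX, hCX⟩ := hc.bddAbove_range
  have hGbdd : ∀ k, G k ≤ CX + v 0 ω + ∑' j, β j ω := by
    intro k
    have h1 : X v u β γ (n : ℝ) k ω ≤ CX := hCX ⟨k, rfl⟩
    have h2 : 0 ≤ v k ω * Q u k ω := mul_nonneg (hv _) (hQpos _).le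
    have := hXeq k
    have hAk := hAbdd k
    rw [hG]
    rw [hA] at hAk
    linarith
  have hγQsum : Summable fun j => γ j ω * Q u (j+1) ω :=
    summable_of_sum_range_le (fun j => mul_nonneg (hγ _) (hQpos _).le) hGbdd
  have hγsum : Summable fun j => γ j ω := by
    refine Summable.of_nonneg_of_le hγ (fun j => ?_) (hγQsum.mul_left M)
    have h1 : (M)⁻¹ ≤ Q u (j+1) ω := hQlb (j+1)
    have h2 : γ j ω * M⁻¹ ≤ γ j ω * Q u (j+1) ω :=
      mul_le_mul_of_nonneg_left h1 (hγ j)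
    calc γ j ω = M * (γ j ω * M⁻¹) := by field_simp
      _ ≤ M * (γ j ω * Q u (j+1) ω) := by nlinarith
  refine ⟨?_, hγsum⟩
  -- convergence of v
  have hGconv : Tendsto G atTop (nhds (∑' j, γ j ω * Q u (j+1) ω)) :=
    hγQsum.hasSum.tendsto_sum_nat
  have hQconv : Tendsto (fun k => Q u k ω) atTop (nhds (⨅ k, Q u k ω)) :=
    tendsto_atTop_ciInf (Q_antitone hu) ⟨M⁻¹, fun x ⟨k, hk⟩ => hk ▸ hQlb k⟩
  have hQinf_pos : 0 < ⨅ k, Q u k ω :=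
    lt_of_lt_of_le (inv_pos.2 hMpos) (le_ciInf hQlb)
  have hVconv : Tendsto (fun k => v k ω * Q u k ω) atTop
      (nhds (c - (∑' j, γ j ω * Q u (j+1) ω) + (⨆ k, A k) + v 0 ω)) := by
    have : (fun k => v k ω * Q u k ω) = fun k =>
        X v u β γ (n : ℝ) k ω - G k + A k + v 0 ω := by
      funext k; rw [hXeq k]; ring
    rw [this]
    exact ((hc.sub hGconv).add hAconv).add tendsto_const_nhds
  refine ⟨(c - (∑' j, γ j ω * Q u (j+1) ω) + (⨆ k, A k) + v 0 ω) * (⨅ k, Q u k ω)⁻¹, ?_⟩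
  have : (fun k => v k ω) = fun k => (v k ω * Q u k ω) * (Q u k ω)⁻¹ := by
    funext k
    exact (mul_inv_cancel_right₀ (hQpos k).ne' _).symm
  rw [this]
  exact hVconv.mul (hQconv.inv₀ hQinf_pos.ne')

end Pointwise

section Measure

variable {Ω : Type*} {m0 : MeasurableSpace Ω} {μ : Measure Ω} [IsProbabilityMeasure μ]

lemma ae_X_tendsto (𝓕 : Filtration ℕ m0) (v u β γ : ℕ → Ω → ℝ)
    (hv : Adapted 𝓕 v) (hu : Adapted 𝓕 u) (hβ : Adapted 𝓕 β) (hγ : Adapted 𝓕 γ)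
    (hvint : ∀ k, Integrable (v k) μ)
    (hvnonneg : ∀ k, 0 ≤ᵐ[μ] v k) (hunonneg : ∀ k, 0 ≤ᵐ[μ] u k)
    (hβnonneg : ∀ k, 0 ≤ᵐ[μ] β k) (hγnonneg : ∀ k, 0 ≤ᵐ[μ] γ k)
    (hrec : ∀ k, ∀ᵐ ω ∂μ,
      (μ[v (k+1) | 𝓕 k]) ω ≤ (1 + u k ω) * v k ω - γ k ω + β k ω)
    (a : ℝ) (ha : 0 ≤ a) :
    ∀ᵐ ω ∂μ, ∃ c, Tendsto (fun k => X v u β γ a k ω) atTop (nhds c) := by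
  have hu' : ∀ᵐ ω ∂μ, ∀ k, 0 ≤ u k ω := ae_all_iff.2 hunonneg
  have hβ' : ∀ᵐ ω ∂μ, ∀ k, 0 ≤ β k ω := ae_all_iff.2 hβnonneg
  have hγ' : ∀ᵐ ω ∂μ, ∀ k, 0 ≤ γ k ω := ae_all_iff.2 hγnonneg
  have hv' : ∀ᵐ ω ∂μ, ∀ k, 0 ≤ v k ω := ae_all_iff.2 hvnonneg
  -- measurability
  have hQm : ∀ k n, k ≤ n + 1 → Measurable[𝓕 n] (Q u k) := by
    intro k n hk
    apply Finset.measurable_prod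
    intro j hj
    have hj' : j ≤ n := by have := Finset.mem_range.1 hj; omega
    exact (measurable_const.add
      ((hu j).mono (𝓕.mono hj') le_rfl)).inv
  have hQm0 : ∀ k, Measurable (Q u k) := fun k =>
    (hQm k k (by omega)).mono (𝓕.le k) le_rfl
  have hgoodm : ∀ n, MeasurableSet[𝓕 n] (good u β a n) := by
    intro n
    have h1 : Measurable[𝓕 n] (fun ω => ∑ j ∈ Finset.range (n+1), u j ω) :=
      Finset.measurable_sum _ fun j hj =>
        (hu j).mono (𝓕.mono (by have := Finset.mem_range.1 hj; omega)) le_rfl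
    have h2 : Measurable[𝓕 n] (fun ω => ∑ j ∈ Finset.range (n+1), β j ω) :=
      Finset.measurable_sum _ fun j hj =>
        (hβ j).mono (𝓕.mono (by have := Finset.mem_range.1 hj; omega)) le_rfl
    exact (measurableSet_le h1 measurable_const).inter
      (measurableSet_le h2 measurable_const)
  have hindm : ∀ n, Measurable[𝓕 n] (ind u β a n) := by
    intro n
    have h1 : Measurable[𝓕 n] (fun _ : Ω => (1:ℝ)) := measurable_const
    exact h1.indicator (hgoodm n)
  have hindm0 : ∀ n, Measurable (ind u β a n) := fun n =>
    (hindm n).mono (𝓕.le n) le_rfl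
  have hvm : ∀ k, Measurable (v k) := fun k => (hv k).mono (𝓕.le k) le_rfl
  have hβm : ∀ k, Measurable (β k) := fun k => (hβ k).mono (𝓕.le k) le_rfl
  have hγm : ∀ k, Measurable (γ k) := fun k => (hγ k).mono (𝓕.le k) le_rfl
  -- integrability
  have int_vQ : ∀ j, Integrable (fun ω => v j ω * Q u j ω) μ := by
    intro j
    have h := Integrable.bdd_mul (c := 1) (hvint j) (hQm0 j).aestronglyMeasurable
      (by filter_upwards [hu'] with ω h
          rw [Real.norm_eq_abs, abs_of_nonneg (Q_pos h j).le]
          exact Q_le_one h j)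
    exact h.congr (ae_of_all _ fun ω => mul_comm _ _)
  have int_ind_mul : ∀ j (f : Ω → ℝ), Integrable f μ →
      Integrable (fun ω => ind u β a j ω * f ω) μ := fun j f hf =>
    hf.bdd_mul (c := 1) (hindm0 j).aestronglyMeasurable
      (ae_of_all _ fun ω => by
        rw [Real.norm_eq_abs, abs_of_nonneg (ind_nonneg j)]; exact ind_le_one j)
  have int_indβQ : ∀ k, Integrable (fun ω => ind u β a k ω * (β k ω * Q u (k+1) ω)) μ := by
    intro k
    refine Integrable.mono' (integrable_const a)
      ((hindm0 k).mul ((hβm k).mul (hQm0 (k+1)))).aestronglyMeasurable ?_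
    filter_upwards [hu', hβ'] with ω h1 h2
    by_cases hg : ω ∈ good u β a k
    · rw [ind_of_mem hg, one_mul, Real.norm_eq_abs,
        abs_of_nonneg (mul_nonneg (h2 k) (Q_pos h1 _).le)]
      have hβle : β k ω ≤ a :=
        le_trans (Finset.single_le_sum (f := fun j => β j ω) (fun j _ => h2 j)
          (Finset.self_mem_range_succ k)) hg.2
      nlinarith [Q_pos h1 (k+1), Q_le_one h1 (k+1), h2 k]
    · rw [ind_of_not_mem hg, zero_mul]; simpa using ha
  have int_indγQ : ∀ k, Integrable (fun ω => ind u β a k ω * (γ k ω * Q u (k+1) ω)) μ := by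
    intro k
    refine Integrable.mono' ((hvint k).abs.add (integrable_const a))
      ((hindm0 k).mul ((hγm k).mul (hQm0 (k+1)))).aestronglyMeasurable ?_
    filter_upwards [hu', hβ', hγ' , hv', hrec k, condExp_nonneg (m := 𝓕 k) (hvnonneg (k+1))]
      with ω h1 h2 h3 h4 h5 h6
    by_cases hg : ω ∈ good u β a k
    · rw [ind_of_mem hg, one_mul, Real.norm_eq_abs,
        abs_of_nonneg (mul_nonneg (h3 k) (Q_pos h1 _).le)]
      have hγle : γ k ω ≤ (1 + u k ω) * v k ω + β k ω := by
        simp only [Pi.zero_apply] at h6; linarith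
      have hβle : β k ω ≤ a :=
        le_trans (Finset.single_le_sum (f := fun j => β j ω) (fun j _ => h2 j)
          (Finset.self_mem_range_succ k)) hg.2
      have hQmul := Q_mul h1 k
      have habs := le_abs_self (v k ω)
      simp only [Pi.add_apply]
      have e1 := mul_le_mul_of_nonneg_right hγle (Q_pos h1 (k+1)).le
      have e3 : v k ω * ((1 + u k ω) * Q u (k+1) ω) = v k ω * Q u k ω := by
        rw [hQmul]
      have e4 : v k ω * Q u k ω ≤ |v k ω| := by
        nlinarith [mul_le_mul_of_nonneg_left (Q_le_one h1 k) (h4 k), habs]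
      have e5 : β k ω * Q u (k+1) ω ≤ β k ω :=
        by nlinarith [mul_le_mul_of_nonneg_left (Q_le_one h1 (k+1)) (h2 k)]
      nlinarith [e1, e3, e4, e5, hβle]
    · rw [ind_of_not_mem hg, zero_mul, norm_zero]
      simp only [Pi.add_apply]
      positivity
  have int_X : ∀ k, Integrable (X v u β γ a k) μ := by
    intro k
    apply integrable_finset_sum
    intro j _
    have heq : (fun ω => ind u β a j ω *
        (v (j+1) ω * Q u (j+1) ω - v j ω * Q u j ω + (γ j ω - β j ω) * Q u (j+1) ω))
        = fun ω => (ind u β a j ω * (v (j+1) ω * Q u (j+1) ω)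
          - ind u β a j ω * (v j ω * Q u j ω))
          + (ind u β a j ω * (γ j ω * Q u (j+1) ω)
          - ind u β a j ω * (β j ω * Q u (j+1) ω)) := by
      funext ω; ring
    rw [heq]
    exact ((int_ind_mul j _ (int_vQ (j+1))).sub (int_ind_mul j _ (int_vQ j))).add
      ((int_indγQ j).sub (int_indβQ j))
  -- adaptedness
  have hXad : Adapted 𝓕 (X v u β γ a) := by
    intro k
    have hm : Measurable[𝓕 k] (X v u β γ a k) := by
      apply Finset.measurable_sum
      intro j hj
      have hjk : j + 1 ≤ k := Finset.mem_range.1 hj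
      have hQk : ∀ i, i ≤ j + 1 → Measurable[𝓕 k] (Q u i) := fun i hi =>
        (hQm i j (by omega)).mono (𝓕.mono (by omega)) le_rfl
      have hum : ∀ i, i ≤ k → Measurable[𝓕 k] (v i) := fun i hi =>
        (hv i).mono (𝓕.mono hi) le_rfl
      exact (((hindm j).mono (𝓕.mono (by omega)) le_rfl).mul
        ((((hum (j+1) hjk).mul (hQk (j+1) le_rfl)).sub
          ((hum j (by omega)).mul (hQk j (by omega)))).add
        ((((hγ j).mono (𝓕.mono (by omega)) le_rfl).sub
          ((hβ j).mono (𝓕.mono (by omega)) le_rfl)).mul (hQk (j+1) le_rfl))))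
    exact hm
  -- supermartingale step
  have hstep : ∀ k, μ[X v u β γ a (k+1)|𝓕 k] ≤ᵐ[μ] X v u β γ a k := by
    intro k
    have hXdecomp : X v u β γ a (k+1) =
        (fun ω => ind u β a k ω * Q u (k+1) ω) * v (k+1) +
        (fun ω => X v u β γ a k ω +
          ind u β a k ω * ((γ k ω - β k ω) * Q u (k+1) ω - v k ω * Q u k ω)) := by
      funext ω
      simp only [Pi.add_apply, Pi.mul_apply, X_succ]
      ring
    have int_cv : Integrable ((fun ω => ind u β a k ω * Q u (k+1) ω) * v (k+1)) μ := by
      refine Integrable.bdd_mul (c := 1) (hvint (k+1))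
        ((hindm0 k).mul (hQm0 (k+1))).aestronglyMeasurable ?_
      filter_upwards [hu'] with ω h1
      rw [Real.norm_eq_abs, abs_of_nonneg (mul_nonneg (ind_nonneg k) (Q_pos h1 _).le)]
      nlinarith [ind_nonneg (u := u) (β := β) (a := a) (ω := ω) k, ind_le_one (u := u) (β := β) (a := a) (ω := ω) k, Q_pos h1 (k+1), Q_le_one h1 (k+1)]
    have int_g : Integrable (fun ω => X v u β γ a k ω +
        ind u β a k ω * ((γ k ω - β k ω) * Q u (k+1) ω - v k ω * Q u k ω)) μ := by
      have heq : (fun ω => X v u β γ a k ω +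
          ind u β a k ω * ((γ k ω - β k ω) * Q u (k+1) ω - v k ω * Q u k ω))
          = fun ω => X v u β γ a k ω +
            ((ind u β a k ω * (γ k ω * Q u (k+1) ω)
              - ind u β a k ω * (β k ω * Q u (k+1) ω))
              - ind u β a k ω * (v k ω * Q u k ω)) := by
        funext ω; ring
      rw [heq]
      exact (int_X k).add (((int_indγQ k).sub (int_indβQ k)).sub
        (int_ind_mul k _ (int_vQ k)))
    have hgm : StronglyMeasurable[𝓕 k] (fun ω => X v u β γ a k ω +
        ind u β a k ω * ((γ k ω - β k ω) * Q u (k+1) ω - v k ω * Q u k ω)) := by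
      have hm : Measurable[𝓕 k] _ := (hXad k).add ((hindm k).mul
        ((((hγ k).sub (hβ k)).mul (hQm (k+1) k le_rfl)).sub
          ((hv k).mul (hQm k k (by omega)))))
      exact hm.stronglyMeasurable
    have hcm : StronglyMeasurable[𝓕 k] (fun ω => ind u β a k ω * Q u (k+1) ω) := by
      have hm : Measurable[𝓕 k] (fun ω => ind u β a k ω * Q u (k+1) ω) :=
        (hindm k).mul (hQm (k+1) k le_rfl)
      exact hm.stronglyMeasurable
    have h1 := condExp_add (μ := μ) (m := 𝓕 k) int_cv int_g
    have h2 := condExp_mul_of_stronglyMeasurable_left hcm int_cv (hvint (k+1))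
    have h3 : μ[(fun ω => X v u β γ a k ω +
        ind u β a k ω * ((γ k ω - β k ω) * Q u (k+1) ω - v k ω * Q u k ω))|𝓕 k]
        = fun ω => X v u β γ a k ω +
          ind u β a k ω * ((γ k ω - β k ω) * Q u (k+1) ω - v k ω * Q u k ω) :=
      condExp_of_stronglyMeasurable (𝓕.le k) hgm int_g
    rw [hXdecomp]
    refine (h1.trans (EventuallyEq.add h2 (by rw [h3]))).le.trans ?_
    filter_upwards [hrec k, hu'] with ω hr h1'
    simp only [Pi.add_apply, Pi.mul_apply]
    have hc0 : 0 ≤ ind u β a k ω * Q u (k+1) ω :=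
      mul_nonneg (ind_nonneg k) (Q_pos h1' _).le
    have h4 : ind u β a k ω * Q u (k+1) ω * (μ[v (k+1)|𝓕 k]) ω ≤
        ind u β a k ω * Q u (k+1) ω * ((1 + u k ω) * v k ω - γ k ω + β k ω) :=
      mul_le_mul_of_nonneg_left hr hc0
    have h5 : (1 + u k ω) * Q u (k+1) ω = Q u k ω := Q_mul h1' k
    have h6 : ind u β a k ω * Q u (k+1) ω * ((1 + u k ω) * v k ω - γ k ω + β k ω) +
        (X v u β γ a k ω +
          ind u β a k ω * ((γ k ω - β k ω) * Q u (k+1) ω - v k ω * Q u k ω))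
        = X v u β γ a k ω := by
      linear_combination (ind u β a k ω * v k ω) * h5
    linarith
  -- expectation bound
  have hEX : ∀ k, ∫ ω, X v u β γ a k ω ∂μ ≤ 0 := by
    intro k
    induction k with
    | zero => simp [X]
    | succ n ih =>
      have h1 : ∫ ω, X v u β γ a (n+1) ω ∂μ
          = ∫ ω, (μ[X v u β γ a (n+1)|𝓕 n]) ω ∂μ := (integral_condExp (𝓕.le n)).symm
      rw [h1]
      exact le_trans (integral_mono_ae integrable_condExp (int_X n) (hstep n)) ih
  -- L1 bound
  set r : ℝ := 2 * (∫ ω, v 0 ω ∂μ) + 2 * a with hr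
  have hbdd : ∀ k, eLpNorm (X v u β γ a k) 1 μ ≤ ENNReal.ofReal r := by
    intro k
    have hlow : ∀ᵐ ω ∂μ, -(v 0 ω + a) ≤ X v u β γ a k ω := by
      filter_upwards [hu', hβ', hγ', hv'] with ω h1 h2 h3 h4
      exact X_lower h1 h2 h3 h4 ha k
    have hnorm : ∫ ω, ‖X v u β γ a k ω‖ ∂μ ≤ r := by
      have hint2 : Integrable (fun ω => 2 * (v 0 ω + a)) μ :=
        ((hvint 0).add (integrable_const a)).const_mul 2
      have hstep1 : ∫ ω, ‖X v u β γ a k ω‖ ∂μ ≤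
          ∫ ω, (X v u β γ a k ω + 2 * (v 0 ω + a)) ∂μ := by
        refine integral_mono_ae (int_X k).norm ((int_X k).add hint2) ?_
        filter_upwards [hlow, hv'] with ω h1 h2
        rw [Real.norm_eq_abs]
        rcases abs_cases (X v u β γ a k ω) with ⟨h3, _⟩ | ⟨h3, _⟩ <;>
          [linarith [h2 0]; linarith]
      have hstep2 : ∫ ω, (X v u β γ a k ω + 2 * (v 0 ω + a)) ∂μ ≤ r := by
        rw [integral_add (int_X k) hint2, integral_const_mul]
        have h7 : ∫ ω, (v 0 ω + a) ∂μ = (∫ ω, v 0 ω ∂μ) + a := by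
          rw [integral_add (hvint 0) (integrable_const a), integral_const]
          simp [measure_univ]
        rw [h7]
        linarith [hEX k]
      linarith
    calc eLpNorm (X v u β γ a k) 1 μ = ∫⁻ ω, ‖X v u β γ a k ω‖₊ ∂μ :=
        eLpNorm_one_eq_lintegral_enorm
      _ = ENNReal.ofReal (∫ ω, ‖X v u β γ a k ω‖ ∂μ) :=
        (ofReal_integral_norm_eq_lintegral_enorm (int_X k)).symm
      _ ≤ ENNReal.ofReal r := ENNReal.ofReal_le_ofReal hnorm
  -- conclude via submartingale convergence
  have hsuper : Supermartingale (X v u β γ a) 𝓕 μ :=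
    supermartingale_nat (fun k => (hXad k).stronglyMeasurable) int_X hstep
  have hsub : Submartingale (-(X v u β γ a)) 𝓕 μ := hsuper.neg
  have hconv := hsub.exists_ae_tendsto_of_bdd (R := r.toNNReal) (fun n => by
    rw [Pi.neg_apply, eLpNorm_neg]
    exact le_trans (hbdd n) (by rw [ENNReal.ofReal]))
  filter_upwards [hconv] with ω hω
  obtain ⟨c, hc⟩ := hω
  refine ⟨-c, ?_⟩
  have : (fun k => X v u β γ a k ω) = fun k => -(-(X v u β γ a) k ω) := by
    funext k; simp
  rw [this]
  exact hc.neg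

end Measure

end RSaux

theorem almost_supermartingale_convergence
    {Ω : Type*} {m0 : MeasurableSpace Ω} {μ : Measure Ω} [IsProbabilityMeasure μ]
    (𝓕 : Filtration ℕ m0) (v u β γ : ℕ → Ω → ℝ)
    (hv : Adapted 𝓕 v) (hu : Adapted 𝓕 u) (hβ : Adapted 𝓕 β) (hγ : Adapted 𝓕 γ)
    (hvint : ∀ k, Integrable (v k) μ)
    (hvnonneg : ∀ k, 0 ≤ᵐ[μ] v k) (hunonneg : ∀ k, 0 ≤ᵐ[μ] u k)
    (hβnonneg : ∀ k, 0 ≤ᵐ[μ] β k) (hγnonneg : ∀ k, 0 ≤ᵐ[μ] γ k)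
    (husum : ∀ᵐ ω ∂μ, Summable (fun k => u k ω))
    (hβsum : ∀ᵐ ω ∂μ, Summable (fun k => β k ω))
    (hrec : ∀ k, ∀ᵐ ω ∂μ,
      (μ[v (k+1) | 𝓕 k]) ω ≤ (1 + u k ω) * v k ω - γ k ω + β k ω) :
    ∀ᵐ ω ∂μ, (∃ l : ℝ, Tendsto (fun k => v k ω) atTop (nhds l)) ∧
      Summable (fun k => γ k ω) := by
  have hX : ∀ n : ℕ, ∀ᵐ ω ∂μ,
      ∃ c, Tendsto (fun k => RSaux.X v u β γ (n : ℝ) k ω) atTop (nhds c) := fun n =>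
    RSaux.ae_X_tendsto 𝓕 v u β γ hv hu hβ hγ hvint hvnonneg hunonneg hβnonneg hγnonneg
      hrec (n : ℝ) (Nat.cast_nonneg n)
  filter_upwards [ae_all_iff.2 hX, ae_all_iff.2 hunonneg, ae_all_iff.2 hβnonneg,
    ae_all_iff.2 hγnonneg, ae_all_iff.2 hvnonneg, husum, hβsum] with ω h1 h2 h3 h4 h5 h6 h7
  exact RSaux.pointwise_conclusion h2 h3 h4 h5 h6 h7 h1
end

section
/- Let X ⊆ ℝⁿ be convex, f : X → ℝ convex and differentiable with L-Lipschitz gradient, and let x* minimize f over X. Then for any x ∈ X and γ > 0, ‖(x − x*) − γ ∇f(x)‖² ≤ (1 + 2γ²L²)‖x − x*‖² + 2γ²‖∇f(x*)‖² − 2γ(f(x) − f(x*)). -/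
open scoped RealInnerProductSpace
open Set

lemma grad_ineq_aux {E : Type*} [NormedAddCommGroup E] [InnerProductSpace ℝ E] [CompleteSpace E]
    {X : Set E} (hXconv : Convex ℝ X) (f : E → ℝ) {g : E} (hconv : ConvexOn ℝ X f)
    {x y : E} (hx : x ∈ X) (hy : y ∈ X) (hgrad : HasGradientAt f g x) :
    ⟪g, y - x⟫ ≤ f y - f x := by
  set v := y - x with hv
  set φ : ℝ → E := fun t => x + t • v with hφ
  have hφd : HasDerivAt φ v 0 := by
    simpa [hφ] using ((hasDerivAt_id (0:ℝ)).smul_const v).const_add x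
  have hgC : HasDerivAt (f ∘ φ) (⟪g, v⟫) 0 := by
    have hF : HasFDerivAt f (InnerProductSpace.toDual ℝ E g) x :=
      (hasGradientAt_iff_hasFDerivAt).mp hgrad
    have hF0 : HasFDerivAt f (InnerProductSpace.toDual ℝ E g) (φ 0) := by
      simpa [hφ] using hF
    have h2 := hF0.comp_hasDerivAt (x := (0:ℝ)) hφd
    simpa [hφ, InnerProductSpace.toDual_apply_apply] using h2
  have hmem : ∀ t ∈ Icc (0:ℝ) 1, φ t ∈ X := by
    intro t ht
    have h := hXconv hx hy (a := 1 - t) (b := t) (by linarith [ht.2]) ht.1 (by ring)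
    have : φ t = (1 - t) • x + t • y := by
      simp only [hφ, hv, smul_sub, sub_smul, one_smul]
      abel
    rwa [this]
  have hS : ConvexOn ℝ (Icc (0:ℝ) 1) (f ∘ φ) := by
    refine ⟨convex_Icc 0 1, fun a ha b hb p q hp hq hpq => ?_⟩
    have hkey : φ (p * a + q * b) = p • φ a + q • φ b := by
      simp only [hφ]
      have : p • x + q • x = x := by rw [← add_smul, hpq, one_smul]
      rw [smul_add, smul_add, smul_smul, smul_smul]
      rw [add_smul, add_add_add_comm, this]
    have := hconv.2 (hmem a ha) (hmem b hb) hp hq hpq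
    simpa [Function.comp, hkey, smul_eq_mul] using this
  have hslope := hS.le_slope_of_hasDerivAt (x := 0) (y := 1)
      (by simp) (by simp) one_pos hgC
  have : slope (f ∘ φ) 0 1 = f y - f x := by
    simp [slope_def_field, hφ, hv, Function.comp]
  linarith [hslope.trans_eq this]

theorem key_convex_step_inequality
    {n : ℕ} (X : Set (EuclideanSpace ℝ (Fin n))) (hXconv : Convex ℝ X)
    (f : EuclideanSpace ℝ (Fin n) → ℝ)
    (f' : EuclideanSpace ℝ (Fin n) → EuclideanSpace ℝ (Fin n))
    (L : ℝ)
    (hconv : ConvexOn ℝ X f)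
    (hgrad : ∀ x ∈ X, HasGradientAt f (f' x) x)
    (hlip : ∀ x ∈ X, ∀ y ∈ X, ‖f' x - f' y‖ ≤ L * ‖x - y‖)
    (xs : EuclideanSpace ℝ (Fin n)) (hxs : xs ∈ X)
    (hmin : ∀ x ∈ X, f xs ≤ f x)
    (x : EuclideanSpace ℝ (Fin n)) (hx : x ∈ X) (γ : ℝ) (hγ : 0 < γ) :
    ‖(x - xs) - γ • f' x‖ ^ 2 ≤
      (1 + 2 * γ ^ 2 * L ^ 2) * ‖x - xs‖ ^ 2 + 2 * γ ^ 2 * ‖f' xs‖ ^ 2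
        - 2 * γ * (f x - f xs) := by
  have hgi : ⟪f' x, xs - x⟫ ≤ f xs - f x :=
    grad_ineq_aux hXconv f hconv hx hxs (hgrad x hx)
  have hinner : f x - f xs ≤ ⟪x - xs, f' x⟫ := by
    have h1 : ⟪f' x, xs - x⟫ = -⟪x - xs, f' x⟫ := by
      rw [real_inner_comm]; rw [show xs - x = -(x - xs) by abel, inner_neg_left]
    linarith [hgi, h1.symm.le]
  have hexp : ‖(x - xs) - γ • f' x‖ ^ 2
      = ‖x - xs‖ ^ 2 - 2 * γ * ⟪x - xs, f' x⟫ + γ ^ 2 * ‖f' x‖ ^ 2 := by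
    rw [norm_sub_sq_real, real_inner_smul_right, norm_smul]
    simp [mul_pow, abs_of_pos hγ]
    ring
  have hnx : ‖f' x‖ ≤ L * ‖x - xs‖ + ‖f' xs‖ := by
    have := norm_sub_norm_le (f' x) (f' xs)
    linarith [hlip x hx xs hxs]
  have hsq : ‖f' x‖ ^ 2 ≤ 2 * L ^ 2 * ‖x - xs‖ ^ 2 + 2 * ‖f' xs‖ ^ 2 := by
    nlinarith [norm_nonneg (f' x), sq_nonneg (L * ‖x - xs‖ - ‖f' xs‖)]
  nlinarith [sq_nonneg γ, hγ.le]
end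

section
/- Suppose a nonnegative sequence a_k satisfies, for constants γ_x > 0, M, M_x, L_θ, Q_θ > 0, the inequality γ_x E[f(x^t;θ*) − f(x*;θ*)] ≤ a_t − a_{t+1} + (γ_x²/2)(M² + M_x²) + L_θ²Q_θ/(2t) for t = 1,…,k, with a_1 ≤ D²/2 ≤ 2D² where D ≥ 0. If x̃ = ∑_{t=1}^k x^t / k and f(·;θ*) is convex on the convex set X containing all x^t, then E[f(x̃;θ*) − f(x*;θ*)] ≤ [4D² + kγ_x²(M² + M_x²) + L_θ²Q_θ(1 + ln k)] / (2kγ_x). In particular, minimizing the right-hand side over γ_x > 0 at γ_x = √((4D² + L_θ²Q_θ(1+ln k))/((M²+M_x²)k)) yields E[f(x̃;θ*) − f(x*;θ*)] ≤ √(B_k/k) with B_k = (4D² + L_θ²Q_θ(1+ln k))(M² + M_x²). -/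
open MeasureTheory

private lemma harmonic_le_log (k : ℕ) (hk : 1 ≤ k) :
    ∑ t ∈ Finset.Icc 1 k, (1 : ℝ) / t ≤ 1 + Real.log k := by
  induction k with
  | zero => omega
  | succ n ih =>
    rcases Nat.eq_or_lt_of_le hk with h | h
    · simp [← h]
    · have hn : 1 ≤ n := by omega
      rw [← Finset.insert_Icc_right_eq_Icc_add_one (by omega), Finset.sum_insert (by simp)]
      have h1 : (1:ℝ)/(n+1) ≤ Real.log (n+1) - Real.log n := by
        have hnp : (0:ℝ) < n := by exact_mod_cast hn
        have hx : (0:ℝ) < (n:ℝ)/(n+1) := by positivity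
        have := Real.log_le_sub_one_of_pos hx
        rw [Real.log_div (ne_of_gt hnp) (by positivity)] at this
        have : Real.log n - Real.log (n+1) ≤ (n:ℝ)/(n+1) - 1 := this
        have hrw : (n:ℝ)/(n+1) - 1 = -(1/(n+1)) := by field_simp; ring
        linarith [hrw ▸ this]
      have := ih hn
      push_cast
      push_cast at this h1
      linarith

private lemma telescope (a : ℕ → ℝ) (k : ℕ) :
    ∑ t ∈ Finset.Icc 1 k, (a t - a (t+1)) = a 1 - a (k+1) := by
  induction k with
  | zero => simp
  | succ n ih =>
    rw [← Finset.insert_Icc_right_eq_Icc_add_one (by omega), Finset.sum_insert (by simp), ih]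
    ring

theorem averaging_rate_bound
    {Ω : Type*} {m0 : MeasurableSpace Ω} (μ : Measure Ω) [IsProbabilityMeasure μ]
    {n : ℕ} (X : Set (EuclideanSpace ℝ (Fin n))) (hXconv : Convex ℝ X)
    (f : EuclideanSpace ℝ (Fin n) → ℝ) (hf : ConvexOn ℝ X f)
    (x : ℕ → Ω → EuclideanSpace ℝ (Fin n)) (xs : EuclideanSpace ℝ (Fin n))
    (hmem : ∀ t ω, x t ω ∈ X) (hxs : xs ∈ X)
    (a : ℕ → ℝ) (ha : ∀ t, 0 ≤ a t)
    (γx M Mx Lθ Qθ D : ℝ) (hγ : 0 < γx) (hM : 0 < M) (hMx : 0 < Mx)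
    (hLθ : 0 < Lθ) (hQθ : 0 < Qθ) (hD : 0 ≤ D)
    (k : ℕ) (hk : 1 ≤ k)
    (hint : ∀ t, Integrable (fun ω => f (x t ω)) μ)
    (hintavg : Integrable (fun ω => f ((k:ℝ)⁻¹ • ∑ t ∈ Finset.Icc 1 k, x t ω)) μ)
    (hrec : ∀ t ∈ Finset.Icc 1 k,
      γx * ∫ ω, (f (x t ω) - f xs) ∂μ ≤
        a t - a (t+1) + γx ^ 2 / 2 * (M ^ 2 + Mx ^ 2) + Lθ ^ 2 * Qθ / (2 * (t:ℝ)))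
    (ha1 : a 1 ≤ D ^ 2 / 2) :
    (∫ ω, (f ((k:ℝ)⁻¹ • ∑ t ∈ Finset.Icc 1 k, x t ω) - f xs) ∂μ ≤
        (4 * D ^ 2 + k * γx ^ 2 * (M ^ 2 + Mx ^ 2)
          + Lθ ^ 2 * Qθ * (1 + Real.log k)) / (2 * k * γx)) ∧
    (γx = Real.sqrt ((4 * D ^ 2 + Lθ ^ 2 * Qθ * (1 + Real.log k))
          / ((M ^ 2 + Mx ^ 2) * k)) →
      ∫ ω, (f ((k:ℝ)⁻¹ • ∑ t ∈ Finset.Icc 1 k, x t ω) - f xs) ∂μ ≤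
        Real.sqrt ((4 * D ^ 2 + Lθ ^ 2 * Qθ * (1 + Real.log k))
          * (M ^ 2 + Mx ^ 2) / k)) := by
  have hkpos : (0:ℝ) < k := by exact_mod_cast hk
  have hcard : (Finset.Icc 1 k).card = k := by simp
  set C := M ^ 2 + Mx ^ 2 with hC
  have hCpos : 0 < C := by positivity
  set L := Lθ ^ 2 * Qθ with hL
  have hLpos : 0 < L := by positivity
  have hlog : (0:ℝ) ≤ Real.log k := Real.log_natCast_nonneg k
  -- pointwise Jensen
  have hjensen : ∀ ω, f ((k:ℝ)⁻¹ • ∑ t ∈ Finset.Icc 1 k, x t ω)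
      ≤ ∑ t ∈ Finset.Icc 1 k, (k:ℝ)⁻¹ * f (x t ω) := by
    intro ω
    have := hf.map_sum_le (t := Finset.Icc 1 k) (w := fun _ => (k:ℝ)⁻¹)
      (p := fun t => x t ω) (fun i _ => by positivity)
      (by rw [Finset.sum_const, hcard, nsmul_eq_mul, mul_inv_cancel₀ (ne_of_gt hkpos)])
      (fun i _ => hmem i ω)
    rw [Finset.smul_sum]
    simpa using this
  -- integral step
  have hintsub : ∀ t, Integrable (fun ω => f (x t ω) - f xs) μ :=
    fun t => (hint t).sub (integrable_const _)
  have hIeq : ∀ t, ∫ ω, (f (x t ω) - f xs) ∂μ = (∫ ω, f (x t ω) ∂μ) - f xs := by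
    intro t
    rw [integral_sub (hint t) (integrable_const _), integral_const]
    simp
  have havg : ∫ ω, (f ((k:ℝ)⁻¹ • ∑ t ∈ Finset.Icc 1 k, x t ω) - f xs) ∂μ
      ≤ (k:ℝ)⁻¹ * ∑ t ∈ Finset.Icc 1 k, ∫ ω, (f (x t ω) - f xs) ∂μ := by
    rw [integral_sub hintavg (integrable_const _), integral_const]
    simp only [measure_univ, probReal_univ, ENNReal.toReal_one, one_smul, smul_eq_mul]
    have h1 : ∫ ω, f ((k:ℝ)⁻¹ • ∑ t ∈ Finset.Icc 1 k, x t ω) ∂μ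
        ≤ ∫ ω, ∑ t ∈ Finset.Icc 1 k, (k:ℝ)⁻¹ * f (x t ω) ∂μ := by
      apply integral_mono hintavg
      · exact integrable_finset_sum _ (fun t _ => (hint t).const_mul _)
      · exact hjensen
    rw [integral_finset_sum _ (fun t _ => (hint t).const_mul _)] at h1
    simp only [integral_const_mul] at h1
    rw [← Finset.mul_sum] at h1
    have h2 : (k:ℝ)⁻¹ * ∑ t ∈ Finset.Icc 1 k, ∫ ω, (f (x t ω) - f xs) ∂μ
        = (k:ℝ)⁻¹ * (∑ t ∈ Finset.Icc 1 k, ∫ ω, f (x t ω) ∂μ) - f xs := by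
      simp only [hIeq, Finset.sum_sub_distrib, Finset.sum_const, hcard, nsmul_eq_mul]
      rw [mul_sub, inv_mul_cancel_left₀ (ne_of_gt hkpos)]
    linarith
  -- summing the recursion
  have hsum : γx * ∑ t ∈ Finset.Icc 1 k, ∫ ω, (f (x t ω) - f xs) ∂μ
      ≤ 2 * D ^ 2 + k * (γx ^ 2 / 2 * C) + L / 2 * (1 + Real.log k) := by
    rw [Finset.mul_sum]
    calc ∑ t ∈ Finset.Icc 1 k, γx * ∫ ω, (f (x t ω) - f xs) ∂μ
        ≤ ∑ t ∈ Finset.Icc 1 k, (a t - a (t+1) + γx ^ 2 / 2 * C + L / (2 * (t:ℝ))) :=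
          Finset.sum_le_sum hrec
      _ = (a 1 - a (k+1)) + k * (γx ^ 2 / 2 * C)
          + L / 2 * ∑ t ∈ Finset.Icc 1 k, (1:ℝ) / t := by
          rw [Finset.sum_add_distrib, Finset.sum_add_distrib, telescope,
            Finset.sum_const, hcard, Finset.mul_sum]
          congr 1
          · rw [nsmul_eq_mul]
          · apply Finset.sum_congr rfl
            intro t ht
            have : (0:ℝ) < t := by
              have := (Finset.mem_Icc.mp ht).1; exact_mod_cast this
            rw [mul_one_div, div_div]
      _ ≤ 2 * D ^ 2 + k * (γx ^ 2 / 2 * C) + L / 2 * (1 + Real.log k) := by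
          have h1 := harmonic_le_log k hk
          have h2 := ha (k+1)
          have hD2 : a 1 ≤ 2 * D ^ 2 := by nlinarith [sq_nonneg D]
          nlinarith
  have hmain : ∫ ω, (f ((k:ℝ)⁻¹ • ∑ t ∈ Finset.Icc 1 k, x t ω) - f xs) ∂μ
      ≤ (4 * D ^ 2 + k * γx ^ 2 * C + L * (1 + Real.log k)) / (2 * k * γx) := by
    rw [le_div_iff₀ (by positivity : (0:ℝ) < 2 * k * γx)]
    set I := ∫ ω, (f ((k:ℝ)⁻¹ • ∑ t ∈ Finset.Icc 1 k, x t ω) - f xs) ∂μ with hI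
    set S := ∑ t ∈ Finset.Icc 1 k, ∫ ω, (f (x t ω) - f xs) ∂μ with hS
    have h1 : I * (2 * k * γx) ≤ ((k:ℝ)⁻¹ * S) * (2 * k * γx) :=
      mul_le_mul_of_nonneg_right havg (by positivity)
    have h2 : ((k:ℝ)⁻¹ * S) * (2 * k * γx) = 2 * (γx * S) := by
      field_simp
    have h3 : 2 * (2 * D ^ 2 + (k:ℝ) * (γx ^ 2 / 2 * C) + L / 2 * (1 + Real.log k))
        = 4 * D ^ 2 + (k:ℝ) * γx ^ 2 * C + L * (1 + Real.log k) := by ring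
    have h4 : 2 * (γx * S) ≤ 2 * (2 * D ^ 2 + (k:ℝ) * (γx ^ 2 / 2 * C) + L / 2 * (1 + Real.log k)) := by
      linarith
    clear_value I S C L
    linarith
  refine ⟨hmain, fun hgeq => ?_⟩
  set A := 4 * D ^ 2 + L * (1 + Real.log k) with hA
  have hApos : 0 < A := by positivity
  have hγsq : γx ^ 2 = A / (C * k) := by
    rw [hgeq, Real.sq_sqrt (by positivity)]
  have hkγC : (k:ℝ) * γx ^ 2 * C = A := by
    rw [hγsq]; field_simp
  have hrhs : (4 * D ^ 2 + k * γx ^ 2 * C + L * (1 + Real.log k)) / (2 * k * γx)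
      = Real.sqrt (A * C / k) := by
    have h1 : 4 * D ^ 2 + k * γx ^ 2 * C + L * (1 + Real.log k) = 2 * A := by
      rw [hA]; linarith [hkγC]
    rw [h1]
    have h2 : Real.sqrt (A * C / k) * (k * γx) = A := by
      rw [hgeq, show (k:ℝ) * Real.sqrt (A/(C*k)) = Real.sqrt (A/(C*k)) * k from mul_comm _ _,
        ← mul_assoc, ← Real.sqrt_mul (by positivity)]
      have he : A * C / k * (A / (C * k)) = (A / k) ^ 2 := by
        field_simp
      rw [he, Real.sqrt_sq (by positivity)]
      field_simp
    have h3 : Real.sqrt (A * C / k) = A / (k * γx) := by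
      rw [eq_div_iff (by positivity)]; exact h2
    rw [h3]
    field_simp
  calc _ ≤ _ := hmain
    _ = Real.sqrt (A * C / k) := hrhs
end

section
/- (Regret bound for projected gradient with diminishing steps) Let F ⊆ ℝⁿ be nonempty, closed, convex and bounded with diameter ‖F‖, and let c¹, c², … be convex differentiable functions on F with ‖∇cᵗ(x)‖ ≤ G for all x ∈ F and all t. Let x¹ ∈ F and x^{t+1} = Π_F(xᵗ − η_t ∇cᵗ(xᵗ)) with η_t = t^{−1/2}. Then for all T ≥ 1, ∑_{t=1}^T cᵗ(xᵗ) − min_{x∈F} ∑_{t=1}^T cᵗ(x) ≤ (‖F‖²√T)/2 + (√T − 1/2)G². -/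
open RealInnerProductSpace Real Finset Topology Filter

section Aux
variable {E : Type*} [NormedAddCommGroup E] [InnerProductSpace ℝ E]

/-- Variational inequality for a metric projection. -/
lemma zink_proj_var {K : Set E} (hK : Convex ℝ K) {P : E → E}
    (hP : ∀ z, P z ∈ K ∧ ∀ w ∈ K, ‖z - P z‖ ≤ ‖z - w‖) (z : E) :
    ∀ w ∈ K, ⟪z - P z, w - P z⟫ ≤ 0 := by
  have hmem := (hP z).1
  have hmin : ‖z - P z‖ = ⨅ w : K, ‖z - w‖ := by
    haveI : Nonempty K := ⟨⟨P z, hmem⟩⟩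
    refine le_antisymm (le_ciInf fun w => (hP z).2 w w.2) ?_
    exact ciInf_le (f := fun w : K => ‖z - (w : E)‖)
      ⟨(0 : ℝ), by rintro b ⟨w, rfl⟩; exact norm_nonneg _⟩ ⟨P z, hmem⟩
  exact (norm_eq_iInf_iff_real_inner_le_zero hK hmem).1 hmin

/-- Projection does not increase distance to points of `K`. -/
lemma zink_proj_dist_le {K : Set E} (hK : Convex ℝ K) {P : E → E}
    (hP : ∀ z, P z ∈ K ∧ ∀ w ∈ K, ‖z - P z‖ ≤ ‖z - w‖) (z : E) {y : E} (hy : y ∈ K) :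
    ‖P z - y‖ ≤ ‖z - y‖ := by
  have hvar := zink_proj_var hK hP z y hy
  have key : ‖P z - y‖ ^ 2 ≤ ‖z - y‖ ^ 2 := by
    have h1 : z - y = (z - P z) + (P z - y) := by abel
    have h2 : ‖(z - P z) + (P z - y)‖ ^ 2
        = ‖z - P z‖ ^ 2 + 2 * ⟪z - P z, P z - y⟫ + ‖P z - y‖ ^ 2 :=
      norm_add_sq_real _ _
    have h3 : ⟪z - P z, P z - y⟫ = - ⟪z - P z, y - P z⟫ := by
      rw [← inner_neg_right]; congr 1; abel
    have h4 : ‖z - y‖ ^ 2 = ‖z - P z‖ ^ 2 + 2 * ⟪z - P z, P z - y⟫ + ‖P z - y‖ ^ 2 := by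
      rw [h1]; exact h2
    nlinarith [sq_nonneg ‖z - P z‖]
  calc ‖P z - y‖ = Real.sqrt (‖P z - y‖ ^ 2) := (Real.sqrt_sq (norm_nonneg _)).symm
    _ ≤ Real.sqrt (‖z - y‖ ^ 2) := Real.sqrt_le_sqrt key
    _ = ‖z - y‖ := Real.sqrt_sq (norm_nonneg _)

/-- Gradient inequality for convex functions. -/
lemma zink_grad_ineq [CompleteSpace E] {K : Set E} {f : E → ℝ} (hf : ConvexOn ℝ K f)
    {a b g : E} (ha : a ∈ K) (hb : b ∈ K) (hg : HasGradientAt f g a) :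
    ⟪g, b - a⟫ ≤ f b - f a := by
  set h : ℝ → E := fun s => a + s • (b - a) with hh
  have hderiv : HasDerivAt (fun s : ℝ => f (h s)) ⟪g, b - a⟫ 0 := by
    have h1 : HasDerivAt h (b - a) 0 := by
      simpa [hh] using ((hasDerivAt_id (0:ℝ)).smul_const (b - a)).const_add a
    have hg' : HasFDerivAt f ((InnerProductSpace.toDual ℝ E) g) (h 0) := by
      simpa [hh] using hg.hasFDerivAt
    have h2 := hg'.comp_hasDerivAt 0 h1
    simp only [InnerProductSpace.toDual_apply_apply] at h2
    exact h2
  have hslope := hasDerivAt_iff_tendsto_slope.1 hderiv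
  have hsub : (𝓝[>] (0:ℝ)) ≤ 𝓝[≠] (0:ℝ) :=
    nhdsWithin_mono _ fun s hs => ne_of_gt hs
  have hslope' : Filter.Tendsto (slope (fun s : ℝ => f (h s)) 0) (𝓝[>] 0)
      (𝓝 ⟪g, b - a⟫) := hslope.mono_left hsub
  refine le_of_tendsto hslope' ?_
  filter_upwards [Ioc_mem_nhdsGT_of_mem (Set.left_mem_Ico.2 one_pos)] with s hs
  have hs0 : 0 < s := hs.1
  have hs1 : s ≤ 1 := hs.2
  have hcomb : f (h s) ≤ (1 - s) * f a + s * f b := by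
    have := hf.2 ha hb (by linarith : (0:ℝ) ≤ 1 - s) hs0.le (by ring)
    have heq : (1 - s) • a + s • b = h s := by
      simp [hh]; module
    rwa [heq] at this
  have h0 : h 0 = a := by simp [hh]
  have hsl : slope (fun s : ℝ => f (h s)) 0 s = (f (h s) - f a) / s := by
    rw [slope_def_field, h0, sub_zero]
  rw [hsl, div_le_iff₀ hs0]
  calc f (h s) - f a ≤ (1 - s) * f a + s * f b - f a := by linarith
    _ = (f b - f a) * s := by ring

end Aux

/-- `∑_{t=1}^T t^{-1/2} ≤ 2√T - 1`. -/
lemma zink_sum_inv_sqrt : ∀ T : ℕ, 1 ≤ T →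
    ∑ t ∈ Finset.Icc 1 T, (Real.sqrt t)⁻¹ ≤ 2 * Real.sqrt T - 1 := by
  refine Nat.le_induction ?_ ?_
  · norm_num
  · intro T hT ih
    rw [Finset.sum_Icc_succ_top (by omega : 1 ≤ T + 1)]
    set a := Real.sqrt T with ha
    set b := Real.sqrt ((T:ℝ) + 1) with hb
    have hbcast : Real.sqrt ((T + 1 : ℕ) : ℝ) = b := by push_cast; rfl
    have ha2 : a ^ 2 = T := Real.sq_sqrt (by positivity)
    have hb2 : b ^ 2 = (T:ℝ) + 1 := Real.sq_sqrt (by positivity)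
    have ha0 : 0 ≤ a := Real.sqrt_nonneg _
    have hb0 : 0 < b := Real.sqrt_pos.2 (by positivity)
    have hkey : (1:ℝ) ≤ b * (2 * b - 2 * a) := by nlinarith [sq_nonneg (a - b)]
    have h5 : (1:ℝ) / b ≤ 2 * b - 2 * a := by
      rw [div_le_iff₀ hb0]; linarith [hkey]
    rw [hbcast]
    rw [one_div] at h5
    linarith

/-- Telescoping bound. -/
lemma zink_telescope (a : ℕ → ℝ) (D2 : ℝ) (h0 : ∀ t, 0 ≤ a t)
    (hD : ∀ t, 1 ≤ t → a t ≤ D2) : ∀ T : ℕ, 1 ≤ T →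
    ∑ t ∈ Finset.Icc 1 T, Real.sqrt t * (a t - a (t+1))
      ≤ Real.sqrt T * D2 - Real.sqrt T * a (T+1) := by
  refine Nat.le_induction ?_ ?_
  · simp only [Finset.Icc_self, Finset.sum_singleton, Nat.cast_one, Real.sqrt_one, one_mul]
    linarith [hD 1 le_rfl]
  · intro T hT ih
    rw [Finset.sum_Icc_succ_top (by omega : 1 ≤ T + 1)]
    have hcast : ((T + 1 : ℕ) : ℝ) = (T:ℝ) + 1 := by push_cast; ring
    rw [hcast]
    have hle : Real.sqrt T ≤ Real.sqrt ((T:ℝ) + 1) := Real.sqrt_le_sqrt (by linarith)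
    have h1 := hD (T+1) (by omega)
    have h2 := h0 (T+2)
    nlinarith [mul_le_mul_of_nonneg_left h1 (sub_nonneg.2 hle)]

/-- `P` is the Euclidean (metric) projection onto `K`. -/
def IsProjOn {n : ℕ} (K : Set (EuclideanSpace ℝ (Fin n)))
    (P : EuclideanSpace ℝ (Fin n) → EuclideanSpace ℝ (Fin n)) : Prop :=
  ∀ z, P z ∈ K ∧ ∀ w ∈ K, ‖z - P z‖ ≤ ‖z - w‖

theorem zinkevich_regret_bound
    {n : ℕ} (F : Set (EuclideanSpace ℝ (Fin n)))
    (hFne : F.Nonempty) (hFcl : IsClosed F) (hFconv : Convex ℝ F)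
    (hFbdd : Bornology.IsBounded F)
    (c : ℕ → EuclideanSpace ℝ (Fin n) → ℝ)
    (gr : ℕ → EuclideanSpace ℝ (Fin n) → EuclideanSpace ℝ (Fin n))
    (G : ℝ)
    (hconv : ∀ t, ConvexOn ℝ F (c t))
    (hgrad : ∀ t, ∀ z ∈ F, HasGradientAt (c t) (gr t z) z)
    (hGbound : ∀ t, ∀ z ∈ F, ‖gr t z‖ ≤ G)
    (P : EuclideanSpace ℝ (Fin n) → EuclideanSpace ℝ (Fin n))
    (hP : IsProjOn F P)
    (x : ℕ → EuclideanSpace ℝ (Fin n)) (hx1 : x 1 ∈ F)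
    (hstep : ∀ t : ℕ, 1 ≤ t →
      x (t+1) = P (x t - (Real.sqrt t)⁻¹ • gr t (x t))) :
    ∀ T : ℕ, 1 ≤ T → ∀ y ∈ F,
      (∑ t ∈ Finset.Icc 1 T, c t (x t)) - (∑ t ∈ Finset.Icc 1 T, c t y) ≤
        Metric.diam F ^ 2 * Real.sqrt T / 2 + (Real.sqrt T - 1/2) * G ^ 2 := by
  intro T hT y hy
  -- all iterates with index ≥ 1 stay in F
  have hxF : ∀ t : ℕ, 1 ≤ t → x t ∈ F := by
    refine Nat.le_induction hx1 ?_
    intro t ht _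
    rw [hstep t ht]
    exact (hP _).1
  set a : ℕ → ℝ := fun t => ‖x t - y‖ ^ 2 with haa
  have ha0 : ∀ t, 0 ≤ a t := fun t => sq_nonneg _
  have haD : ∀ t, 1 ≤ t → a t ≤ Metric.diam F ^ 2 := by
    intro t ht
    have h1 : ‖x t - y‖ ≤ Metric.diam F := by
      rw [← dist_eq_norm]
      exact Metric.dist_le_diam_of_mem hFbdd (hxF t ht) hy
    exact pow_le_pow_left₀ (norm_nonneg _) h1 2
  -- the per-step inequality
  have hstep' : ∀ t : ℕ, 1 ≤ t →
      c t (x t) - c t y ≤ Real.sqrt t / 2 * (a t - a (t+1))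
        + (Real.sqrt t)⁻¹ / 2 * G ^ 2 := by
    intro t ht
    set g := gr t (x t) with hg
    set η := (Real.sqrt t)⁻¹ with hη
    have hst : (1:ℝ) ≤ Real.sqrt t := by
      rw [show (1:ℝ) = Real.sqrt 1 from Real.sqrt_one.symm]
      exact Real.sqrt_le_sqrt (by exact_mod_cast ht)
    have hstpos : 0 < Real.sqrt t := by linarith
    have hηpos : 0 < η := inv_pos.2 hstpos
    have hηs : η * Real.sqrt t = 1 := inv_mul_cancel₀ hstpos.ne'
    have hxt : x t ∈ F := hxF t ht
    -- distance decrease by projection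
    have hproj : ‖x (t+1) - y‖ ≤ ‖(x t - η • g) - y‖ := by
      rw [hstep t ht]
      exact zink_proj_dist_le hFconv hP _ hy
    have hsq : a (t+1) ≤ ‖(x t - η • g) - y‖ ^ 2 :=
      pow_le_pow_left₀ (norm_nonneg _) hproj 2
    have hexp : ‖(x t - η • g) - y‖ ^ 2
        = a t - 2 * (η * ⟪x t - y, g⟫) + η ^ 2 * ‖g‖ ^ 2 := by
      have h1 : (x t - η • g) - y = (x t - y) - η • g := by abel
      rw [h1, norm_sub_sq_real, real_inner_smul_right, norm_smul]
      simp only [Real.norm_eq_abs, abs_of_pos hηpos]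
      simp only [haa]
      ring_nf
    have h2 : a (t+1) ≤ a t - 2 * η * ⟪x t - y, g⟫ + η ^ 2 * ‖g‖ ^ 2 := by
      rw [hexp] at hsq; linarith [hsq]
    -- gradient inequality
    have h3 : ⟪g, y - x t⟫ ≤ c t y - c t (x t) :=
      zink_grad_ineq (hconv t) hxt hy (hgrad t (x t) hxt)
    have h4 : c t (x t) - c t y ≤ ⟪x t - y, g⟫ := by
      have : ⟪g, y - x t⟫ = - ⟪x t - y, g⟫ := by
        rw [real_inner_comm, ← inner_neg_left]; congr 1; abel
      rw [this] at h3; linarith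
    have hgG : ‖g‖ ^ 2 ≤ G ^ 2 :=
      pow_le_pow_left₀ (norm_nonneg _) (hGbound t (x t) hxt) 2
    -- combine
    have h5 : ⟪x t - y, g⟫ ≤ Real.sqrt t / 2 * (a t - a (t+1)) + η / 2 * ‖g‖ ^ 2 := by
      have h6 := mul_le_mul_of_nonneg_left h2 (by positivity : (0:ℝ) ≤ Real.sqrt t / 2)
      have e1 : Real.sqrt t * η = 1 := by rw [mul_comm]; exact hηs
      have e2 : Real.sqrt t * η ^ 2 = η := by rw [sq, ← mul_assoc, e1, one_mul]
      have e3 : Real.sqrt t * η * ⟪x t - y, g⟫ = ⟪x t - y, g⟫ := by rw [e1, one_mul]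
      have e4 : Real.sqrt t * η ^ 2 * ‖g‖ ^ 2 = η * ‖g‖ ^ 2 := by rw [e2]
      nlinarith [h6, e3, e4]
    have h7 : η / 2 * ‖g‖ ^ 2 ≤ η / 2 * G ^ 2 :=
      mul_le_mul_of_nonneg_left hgG (by positivity)
    calc c t (x t) - c t y ≤ ⟪x t - y, g⟫ := h4
      _ ≤ Real.sqrt t / 2 * (a t - a (t+1)) + η / 2 * ‖g‖ ^ 2 := h5
      _ ≤ Real.sqrt t / 2 * (a t - a (t+1)) + η / 2 * G ^ 2 := by linarith
      _ = Real.sqrt t / 2 * (a t - a (t+1)) + η / 2 * G ^ 2 := rfl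
  -- sum the per-step inequalities
  have hsum1 : (∑ t ∈ Finset.Icc 1 T, c t (x t)) - (∑ t ∈ Finset.Icc 1 T, c t y)
      = ∑ t ∈ Finset.Icc 1 T, (c t (x t) - c t y) := (Finset.sum_sub_distrib _ _).symm
  have hsum2 : ∑ t ∈ Finset.Icc 1 T, (c t (x t) - c t y)
      ≤ ∑ t ∈ Finset.Icc 1 T, (Real.sqrt t / 2 * (a t - a (t+1))
        + (Real.sqrt t)⁻¹ / 2 * G ^ 2) :=
    Finset.sum_le_sum fun t htm => hstep' t (Finset.mem_Icc.1 htm).1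
  have hsplit : ∑ t ∈ Finset.Icc 1 T, (Real.sqrt t / 2 * (a t - a (t+1))
        + (Real.sqrt t)⁻¹ / 2 * G ^ 2)
      = (∑ t ∈ Finset.Icc 1 T, Real.sqrt t * (a t - a (t+1))) / 2
        + (∑ t ∈ Finset.Icc 1 T, (Real.sqrt t)⁻¹) * (G ^ 2 / 2) := by
    rw [Finset.sum_add_distrib, Finset.sum_div, Finset.sum_mul]
    congr 1 <;> exact Finset.sum_congr rfl fun t _ => by ring
  have hA : ∑ t ∈ Finset.Icc 1 T, Real.sqrt t * (a t - a (t+1))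
      ≤ Real.sqrt T * Metric.diam F ^ 2 := by
    have := zink_telescope a _ ha0 haD T hT
    nlinarith [mul_nonneg (Real.sqrt_nonneg (T:ℝ)) (ha0 (T+1))]
  have hB := zink_sum_inv_sqrt T hT
  calc (∑ t ∈ Finset.Icc 1 T, c t (x t)) - (∑ t ∈ Finset.Icc 1 T, c t y)
      = ∑ t ∈ Finset.Icc 1 T, (c t (x t) - c t y) := hsum1
    _ ≤ (∑ t ∈ Finset.Icc 1 T, Real.sqrt t * (a t - a (t+1))) / 2
        + (∑ t ∈ Finset.Icc 1 T, (Real.sqrt t)⁻¹) * (G ^ 2 / 2) := by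
        rw [← hsplit]; exact hsum2
    _ ≤ (Real.sqrt T * Metric.diam F ^ 2) / 2 + (2 * Real.sqrt T - 1) * (G ^ 2 / 2) := by
        have hG2 : (0:ℝ) ≤ G ^ 2 / 2 := by positivity
        exact add_le_add (by linarith) (mul_le_mul_of_nonneg_right hB hG2)
    _ = Metric.diam F ^ 2 * Real.sqrt T / 2 + (Real.sqrt T - 1/2) * G ^ 2 := by ring
end
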